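/- For any positive integer $k$ and any integer $n \ge 1$, the fan graph $P_n + K_1$ satisfies: $\dim_k(P_n + K_1) = 1$ if $n = 1$; $\dim_k(P_n + K_1) = 2$ if $n \in \{2, 3\}$; $\dim_k(P_n + K_1) = 3$ if $n = 6$; and $\dim_k(P_n + K_1) = \lfloor \tfrac{2n+2}{5} \rfloor$ otherwise. -/

import Mathlib

open SimpleGraph

/-- The distance-`k` truncated distance `dₖ(x,y) = min{d(x,y), k+1}`, valued in `ℕ∞`
(so unreachable pairs have distance `⊤`, which is truncated to `k+1`). -/
noncomputable def distK {V : Type*} (G : SimpleGraph V) (k : ℕ) (x y : V) : ℕ∞ :=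
  min (G.edist x y) (k + 1)

/-- `S` is a distance-`k` resolving set of `G`. -/
def IsDistKResolving {V : Type*} (G : SimpleGraph V) (k : ℕ) (S : Set V) : Prop :=
  ∀ x y : V, x ≠ y → ∃ z ∈ S, distK G k x z ≠ distK G k y z

/-- The distance-`k` dimension of a finite graph `G`: the minimum cardinality of a
distance-`k` resolving set of `G`. -/
noncomputable def dimK {V : Type*} [Fintype V] (G : SimpleGraph V) (k : ℕ) : ℕ :=
  sInf { m | ∃ S : Finset V, IsDistKResolving G k ↑S ∧ S.card = m }

/-- The join of two graphs: their disjoint union together with all edges between them. -/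
def graphJoin {α β : Type*} (G : SimpleGraph α) (H : SimpleGraph β) :
    SimpleGraph (α ⊕ β) where
  Adj x y := match x, y with
    | Sum.inl a, Sum.inl b => G.Adj a b
    | Sum.inr a, Sum.inr b => H.Adj a b
    | Sum.inl _, Sum.inr _ => True
    | Sum.inr _, Sum.inl _ => True
  symm := by
    constructor
    rintro (a | a) (b | b) h
    · exact G.symm.symm _ _ h
    · trivial
    · trivial
    · exact H.symm.symm _ _ h
  loopless := by
    constructor
    rintro (a | a) h
    · exact G.loopless.irrefl a h
    · exact H.loopless.irrefl a h

/-!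
The fan has a centre adjacent to every path vertex, so its diameter is at most 2. For `k ≥ 1`
the truncated distances are therefore `0`, `1`, `2`, and `S` resolves the fan iff any two vertices
are separated by a vertex of `S` that is one of them or is adjacent to exactly one of them.

Lower bound: the centre separates no two path vertices, so the path vertices `T` of `S` resolve the
path, and the path vertices outside `T` have pairwise distinct traces `N(u) ∩ T`. At most one trace
is empty, at most `|T|` are singletons, and the traces have total size at most `2|T|`; hence
`2(n - |T|) ≤ 3|T| + 2`. For `n = 1, 3, 6` the bound `n + 1 ≤ |S| + 2^|S|` (the vertices outside `S`
have distinct traces on `S`) is better, and for `n = 2` the fan is a triangle.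

Upper bound: the path vertices with index `≡ 1, 3 (mod 5)` (adjusted at the end) resolve the path,
and once there are at least three of them no path vertex is adjacent to all of them, so they also
separate the path from the centre. The remaining small fans get explicit sets.
-/

open Finset

namespace SimpleGraph

variable {V : Type*} {G : SimpleGraph V}

variable (G) in
def IsAdjResolving (S : Set V) : Prop :=
  ∀ x y : V, x ≠ y → ∃ z ∈ S, z = x ∨ z = y ∨ ¬(G.Adj x z ↔ G.Adj y z)

instance [Fintype V] [DecidableEq V] [DecidableRel G.Adj] (S : Finset V) :
    Decidable (IsAdjResolving G S) := by
  unfold IsAdjResolving; infer_instance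

open Classical in
theorem distK_eq_ite {k : ℕ} (hk : 1 ≤ k) {x z : V} (h : G.edist x z ≤ 2) :
    distK G k x z = if x = z then 0 else if G.Adj x z then 1 else 2 := by
  have h2k : (2 : ℕ∞) ≤ k + 1 := by exact_mod_cast (by omega : 2 ≤ k + 1)
  rw [distK, min_eq_left (h.trans h2k)]
  split_ifs with hxz hadj
  · rw [hxz, edist_self]
  · exact edist_eq_one_iff_adj.mpr hadj
  · have h0 : G.edist x z ≠ 0 := edist_eq_zero_iff.not.mpr hxz
    have h1 : G.edist x z ≠ 1 := edist_eq_one_iff_adj.not.mpr hadj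
    lift G.edist x z to ℕ using ne_top_of_le_ne_top (by decide) h with d
    norm_cast at h h0 h1 ⊢
    omega

theorem isDistKResolving_iff_isAdjResolving {k : ℕ} (hk : 1 ≤ k)
    (hdiam : ∀ x y, G.edist x y ≤ 2) {S : Set V} :
    IsDistKResolving G k S ↔ IsAdjResolving G S := by
  refine forall₂_congr fun x y => forall_congr' fun hxy =>
    exists_congr fun z => and_congr_right fun _ => ?_
  rw [distK_eq_ite hk (hdiam x z), distK_eq_ite hk (hdiam y z)]
  by_cases hx : x = z <;> by_cases hy : y = z
  · exact absurd (hx.trans hy.symm) hxy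
  all_goals split_ifs <;> simp_all [eq_comm]

theorem dimK_eq_of_isDistKResolving [Fintype V] {k m : ℕ} (S : Finset V)
    (hS : IsDistKResolving G k S) (hcard : #S = m)
    (hmin : ∀ S : Finset V, IsDistKResolving G k S → m ≤ #S) : dimK G k = m :=
  le_antisymm (Nat.sInf_le ⟨S, hS, hcard⟩)
    (le_csInf ⟨m, S, hS, hcard⟩ fun _ ⟨T, hT, hTm⟩ => hTm ▸ hmin T hT)

variable (G) in
def adjTrace [DecidableRel G.Adj] (S : Finset V) (u : V) : Finset V := {z ∈ S | G.Adj u z}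

theorem IsAdjResolving.injOn_adjTrace [DecidableRel G.Adj] {S : Finset V}
    (hS : IsAdjResolving G S) : Set.InjOn (adjTrace G S) (↑S)ᶜ := by
  intro u hu v hv huv
  by_contra hne
  obtain ⟨z, hz, rfl | rfl | h⟩ := hS u v hne
  · exact hu hz
  · exact hv hz
  · exact h (by simpa [adjTrace, mem_coe.mp hz] using Finset.ext_iff.mp huv z)

section Fintype

variable [Fintype V]

theorem IsAdjResolving.card_le_card_add_two_pow {S : Finset V} (hS : IsAdjResolving G S) :
    Fintype.card V ≤ #S + 2 ^ #S := by
  classical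
  have : #Sᶜ ≤ #S.powerset :=
    card_le_card_of_injOn (adjTrace G S) (fun _ _ => mem_powerset.mpr (filter_subset _ _))
      (by simpa using hS.injOn_adjTrace)
  rw [card_compl, card_powerset] at this
  omega

theorem IsAdjResolving.le_card_of_sub_one_add_two_pow_lt {S : Finset V}
    (hS : IsAdjResolving G S) {m : ℕ} (hm : m - 1 + 2 ^ (m - 1) < Fintype.card V) : m ≤ #S := by
  by_contra! h
  have := hS.card_le_card_add_two_pow
  have := Nat.pow_le_pow_right two_pos (Nat.le_sub_one_of_lt h)
  omega

theorem IsAdjResolving.card_le_card_add_one {S : Finset V}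
    (hS : IsAdjResolving (⊤ : SimpleGraph V) S) : Fintype.card V ≤ #S + 1 := by
  classical
  by_contra! h
  obtain ⟨x, hx, y, hy, hxy⟩ := one_lt_card.mp (by rw [card_compl]; omega : 1 < #Sᶜ)
  obtain ⟨z, hz, h⟩ := hS x y hxy
  have hzx : z ≠ x := by rintro rfl; exact (mem_compl.mp hx) hz
  have hzy : z ≠ y := by rintro rfl; exact (mem_compl.mp hy) hz
  simp [hzx, hzy, Ne.symm hzx, Ne.symm hzy] at h

theorem IsAdjResolving.two_mul_card_le [DecidableEq V] [DecidableRel G.Adj] {T : Finset V}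
    (hT : IsAdjResolving G T) : 2 * Fintype.card V ≤ (G.maxDegree + 3) * #T + 2 := by
  set sig := adjTrace G T
  have hinj : Set.InjOn sig ↑Tᶜ := by simpa using hT.injOn_adjTrace
  have hsingle : #{u ∈ Tᶜ | #(sig u) = 1} ≤ #T := by
    calc #{u ∈ Tᶜ | #(sig u) = 1}
        ≤ #(T.powersetCard 1) :=
          card_le_card_of_injOn sig
            (fun u hu => mem_powersetCard.mpr ⟨filter_subset _ _, (mem_filter.mp hu).2⟩)
            (hinj.mono fun u hu => by simpa using (mem_filter.mp hu).1)
      _ = #T := by simp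
  have hempty : #{u ∈ Tᶜ | #(sig u) = 0} ≤ 1 := by
    refine card_le_one.mpr fun u hu v hv => hinj (mem_filter.mp hu).1 (mem_filter.mp hv).1 ?_
    rw [card_eq_zero.mp (mem_filter.mp hu).2, card_eq_zero.mp (mem_filter.mp hv).2]
  have hedges : ∑ u ∈ Tᶜ, #(sig u) ≤ #T * G.maxDegree := by
    rw [show ∑ u ∈ Tᶜ, #(sig u) = ∑ u ∈ Tᶜ, #(T.bipartiteAbove G.Adj u) from rfl,
      sum_card_bipartiteAbove_eq_sum_card_bipartiteBelow, ← smul_eq_mul]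
    refine sum_le_card_nsmul _ _ _ fun t _ => ?_
    calc #(Tᶜ.bipartiteBelow G.Adj t) ≤ #(G.neighborFinset t) :=
          card_le_card fun u hu => by simpa [adj_comm] using (mem_filter.mp hu).2
      _ ≤ G.maxDegree := by rw [card_neighborFinset_eq_degree]; exact G.degree_le_maxDegree t
  have hcount : 2 * #Tᶜ ≤
      ∑ u ∈ Tᶜ, #(sig u) + #{u ∈ Tᶜ | #(sig u) = 1} + 2 * #{u ∈ Tᶜ | #(sig u) = 0} := by
    rw [card_filter, card_filter, mul_sum, ← sum_add_distrib, ← sum_add_distrib, mul_comm,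
      ← smul_eq_mul, ← sum_const]
    exact sum_le_sum fun u _ => by split_ifs <;> omega
  have := card_compl_add_card T
  nlinarith

theorem exists_not_adj_of_maxDegree_lt [DecidableEq V] [DecidableRel G.Adj] {T : Finset V}
    (h : G.maxDegree < #T) (u : V) : ∃ t ∈ T, ¬G.Adj u t := by
  by_contra! hall
  have : #T ≤ G.degree u := by
    rw [← card_neighborFinset_eq_degree]
    exact card_le_card fun t ht => (mem_neighborFinset _ _ _).mpr (hall t ht)
  exact absurd (G.degree_le_maxDegree u) (by omega)

end Fintype

section Cone

variable (G) in
abbrev cone : SimpleGraph (V ⊕ Fin 1) := graphJoin G ⊤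

@[simp]
theorem cone_adj_inl_inl {a b : V} : (cone G).Adj (.inl a) (.inl b) ↔ G.Adj a b := Iff.rfl

@[simp]
theorem cone_adj_inl_inr {a : V} {c : Fin 1} : (cone G).Adj (.inl a) (.inr c) := trivial

@[simp]
theorem cone_adj_inr_inl {a : V} {c : Fin 1} : (cone G).Adj (.inr c) (.inl a) := trivial

theorem cone_top : cone (⊤ : SimpleGraph V) = ⊤ := by
  ext (a | c) (b | c')
  · simp
  · simp
  · simp
  · simp [Subsingleton.elim c c']

theorem edist_cone_le_two (x y : V ⊕ Fin 1) : (cone G).edist x y ≤ 2 := by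
  have hcentre : ∀ x, (cone G).edist x (.inr 0) ≤ 1 := by
    rintro (a | c)
    · exact (edist_eq_one_iff_adj.mpr cone_adj_inl_inr).le
    · simp [Subsingleton.elim c 0]
  calc (cone G).edist x y ≤ (cone G).edist x (.inr 0) + (cone G).edist (.inr 0) y :=
        SimpleGraph.edist_triangle
    _ ≤ 1 + 1 := add_le_add (hcentre x) (edist_comm ▸ hcentre y)
    _ = 2 := one_add_one_eq_two

theorem IsAdjResolving.of_cone {S : Set (V ⊕ Fin 1)} (hS : IsAdjResolving (cone G) S) :
    IsAdjResolving G (Sum.inl ⁻¹' S) := by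
  intro x y hxy
  obtain ⟨z | c, hz, h⟩ := hS (.inl x) (.inl y) (Sum.inl_injective.ne hxy)
  · exact ⟨z, hz, by simpa using h⟩
  · simp at h

theorem IsAdjResolving.cone_image {T : Set V} (hT : IsAdjResolving G T)
    (hcentre : ∀ u ∉ T, ∃ t ∈ T, ¬G.Adj u t) : IsAdjResolving (cone G) (Sum.inl '' T) := by
  have hsep : ∀ u (c : Fin 1), ∃ z ∈ Sum.inl '' T, z = .inl u ∨
      ¬((cone G).Adj (.inl u) z ↔ (cone G).Adj (.inr c) z) := by
    intro u c
    by_cases hu : u ∈ T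
    · exact ⟨.inl u, Set.mem_image_of_mem _ hu, .inl rfl⟩
    · obtain ⟨t, ht, hnadj⟩ := hcentre u hu
      exact ⟨.inl t, Set.mem_image_of_mem _ ht, .inr (by simpa using hnadj)⟩
  rintro (x | c) (y | c') hxy
  · obtain ⟨z, hz, h⟩ := hT x y (fun h => hxy (congrArg _ h))
    exact ⟨.inl z, Set.mem_image_of_mem _ hz, by simpa using h⟩
  · obtain ⟨z, hz, h | h⟩ := hsep x c'
    exacts [⟨z, hz, .inl h⟩, ⟨z, hz, .inr (.inr h)⟩]
  · obtain ⟨z, hz, h | h⟩ := hsep y c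
    exacts [⟨z, hz, .inr (.inl h)⟩, ⟨z, hz, .inr (.inr fun h' => h h'.symm)⟩]
  · exact absurd (congrArg _ (Subsingleton.elim c c')) hxy

theorem dimK_cone_eq [Fintype V] {k m : ℕ} (hk : 1 ≤ k) (T : Finset V)
    (hT : IsAdjResolving G T) (hcentre : ∀ u ∉ T, ∃ t ∈ T, ¬G.Adj u t) (hcard : #T = m)
    (hmin : ∀ S : Finset (V ⊕ Fin 1), IsAdjResolving (cone G) S → m ≤ #S) :
    dimK (cone G) k = m := by
  simp_rw [← isDistKResolving_iff_isAdjResolving hk edist_cone_le_two] at hmin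
  refine dimK_eq_of_isDistKResolving (T.map .inl) ?_ (by rw [card_map, hcard]) hmin
  rw [isDistKResolving_iff_isAdjResolving hk edist_cone_le_two, coe_map]
  exact hT.cone_image hcentre

end Cone

section Path

instance (n : ℕ) : DecidableRel (pathGraph n).Adj := fun _ _ => decidable_of_iff' _ pathGraph_adj

theorem maxDegree_pathGraph_le (n : ℕ) : (pathGraph n).maxDegree ≤ 2 := by
  refine maxDegree_le_of_forall_degree_le _ _ fun u => ?_
  calc (pathGraph n).degree u = #((pathGraph n).neighborFinset u) :=
        (card_neighborFinset_eq_degree _ _).symm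
    _ ≤ #({u.val - 1, u.val + 1} : Finset ℕ) :=
        card_le_card_of_injOn Fin.val
          (fun v hv => by simp only [coe_insert, coe_singleton, Set.mem_insert_iff,
            Set.mem_singleton_iff, mem_coe, mem_neighborFinset, pathGraph_adj] at hv ⊢; omega)
          Fin.val_injective.injOn
    _ ≤ 2 := card_le_two

-- Truncated subtraction is harmless below: `P (0 - 1) = P 0`, which is already excluded.
theorem exists_path_separator {n : ℕ} (P : ℕ → Prop)
    (hisolated : ∀ u v, u < v → v < n → ¬P (u - 1) → ¬P u → ¬P (u + 1) →
      ¬P (v - 1) → ¬P v → ¬P (v + 1) → False)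
    (hgap : ∀ u, u + 2 < n → ¬P u → P (u + 1) → ¬P (u + 2) → P (u - 1) ∨ P (u + 3))
    {u v : ℕ} (huv : u < v) (hvn : v < n) (hu : ¬P u) (hv : ¬P v) :
    ∃ t, P t ∧ ¬(u + 1 = t ∨ t + 1 = u ↔ v + 1 = t ∨ t + 1 = v) := by
  by_contra! hadj
  by_cases hright : P (u + 1)
  · -- `u + 1` is a common neighbour, so `v = u + 2`, and `hgap` yields a separating vertex
    obtain rfl : v = u + 2 := by have := hadj _ hright; omega
    rcases hgap u hvn hu hright hv with hleft | hfar
    · have : u ≠ 0 := by rintro rfl; exact hu hleft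
      have := hadj _ hleft
      omega
    · have := hadj _ hfar
      omega
  by_cases hleft : P (u - 1)
  · have : u ≠ 0 := by rintro rfl; exact hu hleft
    have := hadj _ hleft
    omega
  refine hisolated u v huv hvn hleft hu hright (fun h => ?_) hv (fun h => ?_)
  · have : v - 1 ≠ u + 1 := fun e => hright (e ▸ h)
    have := hadj _ h
    omega
  · have := hadj _ h
    omega

theorem isAdjResolving_pathGraph {n : ℕ} (P : ℕ → Prop) [DecidablePred P]
    (hP : ∀ i, P i → i < n)
    (hisolated : ∀ u v, u < v → v < n → ¬P (u - 1) → ¬P u → ¬P (u + 1) →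
      ¬P (v - 1) → ¬P v → ¬P (v + 1) → False)
    (hgap : ∀ u, u + 2 < n → ¬P u → P (u + 1) → ¬P (u + 2) → P (u - 1) ∨ P (u + 3)) :
    IsAdjResolving (pathGraph n) ({i : Fin n | P i} : Finset (Fin n)) := by
  suffices h : ∀ x y : Fin n, x < y → ∃ z ∈ ({i : Fin n | P i} : Finset (Fin n)),
      z = x ∨ z = y ∨ ¬((pathGraph n).Adj x z ↔ (pathGraph n).Adj y z) by
    intro x y hxy
    rcases hxy.lt_or_gt with hlt | hlt
    · simpa using h x y hlt
    · obtain ⟨z, hz, h⟩ := h y x hlt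
      exact ⟨z, hz, by tauto⟩
  intro x y hxy
  by_cases hx : P x
  · exact ⟨x, by simpa using hx, .inl rfl⟩
  by_cases hy : P y
  · exact ⟨y, by simpa using hy, .inr (.inl rfl)⟩
  obtain ⟨t, ht, hsep⟩ := exists_path_separator P hisolated hgap hxy y.isLt hx hy
  exact ⟨⟨t, hP t ht⟩, by simpa using ht, .inr (.inr (by simpa [pathGraph_adj] using hsep))⟩

theorem IsAdjResolving.two_mul_le_of_cone_pathGraph {n : ℕ} {S : Finset (Fin n ⊕ Fin 1)}
    (hS : IsAdjResolving (cone (pathGraph n)) S) : 2 * n ≤ 5 * #S + 2 := by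
  have hT : IsAdjResolving (pathGraph n) (S.preimage Sum.inl Sum.inl_injective.injOn) := by
    rw [coe_preimage]; exact hS.of_cone
  have hcount := hT.two_mul_card_le
  have hdeg := maxDegree_pathGraph_le n
  have hcard : #(S.preimage Sum.inl Sum.inl_injective.injOn) ≤ #S :=
    card_le_card_of_injOn Sum.inl (fun _ h => mem_preimage.mp h) Sum.inl_injective.injOn
  rw [Fintype.card_fin] at hcount
  nlinarith

theorem card_filter_mod_eq {r : ℕ} (hr : 0 < r) (n a : ℕ) :
    #{i ∈ range n | i % r = a % r} = n / r + if a % r < n % r then 1 else 0 := by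
  rw [← Nat.count_eq_card_filter_range]
  exact Nat.count_modEq_card n hr a

-- The positions `≡ 1, 3 (mod 5)`; when `n ≡ 3 (mod 5)` the vertices `n - 3` and `n - 1` would both
-- see only `n - 2`, so the residue `1` is replaced by `0`.
def fanPattern (n i : ℕ) : Prop :=
  i < n ∧ (i % 5 = 3 ∨ (n % 5 = 3 ∧ i % 5 = 0) ∨ (n % 5 ≠ 3 ∧ i % 5 = 1))

instance (n : ℕ) : DecidablePred (fanPattern n) := fun _ => by unfold fanPattern; infer_instance

theorem card_fanPattern (n : ℕ) : #{i : Fin n | fanPattern n i} = (2 * n + 2) / 5 := by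
  have hpattern : ∀ i, fanPattern n i ↔
      i ∈ range n ∧ (i % 5 = 3 % 5 ∨ i % 5 = (if n % 5 = 3 then 0 else 1) % 5) := fun i => by
    rw [mem_range]; unfold fanPattern; split_ifs <;> omega
  have hval : #{i : Fin n | fanPattern n i} = #{i ∈ range n | fanPattern n i} := by
    rw [← card_map Fin.valEmbedding, map_filter', Fin.map_valEmbedding_univ, ← Nat.Iio_eq_range]
    congr 1
    ext i
    simp only [mem_filter, mem_Iio, Fin.valEmbedding_apply]
    exact ⟨fun ⟨h, a, ha, e⟩ => ⟨h, e ▸ ha⟩, fun ⟨h, hi⟩ => ⟨h, ⟨i, h⟩, hi, rfl⟩⟩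
  rw [hval, filter_congr fun i hi => (hpattern i).trans (and_iff_right hi), filter_or,
    card_union_of_disjoint (disjoint_filter.mpr fun i _ h => by split_ifs <;> omega),
    card_filter_mod_eq (by norm_num), card_filter_mod_eq (by norm_num)]
  split_ifs <;> omega

theorem isAdjResolving_fanPattern (n : ℕ) :
    IsAdjResolving (pathGraph n) ({i : Fin n | fanPattern n i} : Finset (Fin n)) :=
  isAdjResolving_pathGraph _ (fun _ h => h.1) (by unfold fanPattern; omega)
    (by unfold fanPattern; omega)

theorem exists_not_adj_fanPattern {n : ℕ} (hn : 7 ≤ n) (u : Fin n) :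
    ∃ t ∈ ({i : Fin n | fanPattern n i} : Finset (Fin n)), ¬(pathGraph n).Adj u t :=
  exists_not_adj_of_maxDegree_lt ((maxDegree_pathGraph_le n).trans_lt
    (by rw [card_fanPattern]; omega)) u

end Path

end SimpleGraph

theorem stmt10_general (k n : ℕ) (hk : 1 ≤ k) :
    (n = 1 → dimK (graphJoin (pathGraph n) (⊤ : SimpleGraph (Fin 1))) k = 1) ∧
    (n = 2 ∨ n = 3 → dimK (graphJoin (pathGraph n) (⊤ : SimpleGraph (Fin 1))) k = 2) ∧
    (n = 6 → dimK (graphJoin (pathGraph n) (⊤ : SimpleGraph (Fin 1))) k = 3) ∧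
    (n ≠ 1 ∧ n ≠ 2 ∧ n ≠ 3 ∧ n ≠ 6 →
      dimK (graphJoin (pathGraph n) (⊤ : SimpleGraph (Fin 1))) k = (2 * n + 2) / 5) := by
  refine ⟨?_, ?_, ?_, ?_⟩
  · rintro rfl
    exact dimK_cone_eq hk {0} (by decide) (by decide) rfl
      fun S hS => hS.le_card_of_sub_one_add_two_pow_lt (by simp)
  · rintro (rfl | rfl)
    · refine dimK_cone_eq hk {0, 1} (by decide) (by decide) rfl fun S hS => ?_
      rw [pathGraph_two_eq_top, cone_top] at hS
      have := hS.card_le_card_add_one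
      rw [Fintype.card_sum, Fintype.card_fin, Fintype.card_fin] at this
      omega
    · exact dimK_cone_eq hk {0, 1} (by decide) (by decide) rfl
        fun S hS => hS.le_card_of_sub_one_add_two_pow_lt (by simp)
  · rintro rfl
    exact dimK_cone_eq hk {0, 1, 3} (by decide) (by decide) rfl
      fun S hS => hS.le_card_of_sub_one_add_two_pow_lt (by simp)
  · rintro ⟨h1, h2, h3, h6⟩
    obtain rfl | rfl | rfl | hn : n = 0 ∨ n = 4 ∨ n = 5 ∨ 7 ≤ n := by omega
    · exact dimK_cone_eq hk ∅ (by decide) (by decide) rfl fun _ _ => Nat.zero_le _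
    · exact dimK_cone_eq hk {1, 2} (by decide) (by decide) rfl
        fun S hS => by have := hS.two_mul_le_of_cone_pathGraph; omega
    · exact dimK_cone_eq hk {1, 2} (by decide) (by decide) rfl
        fun S hS => by have := hS.two_mul_le_of_cone_pathGraph; omega
    · exact dimK_cone_eq hk _ (isAdjResolving_fanPattern n)
        (fun u _ => exists_not_adj_fanPattern hn u) (card_fanPattern n)
        fun S hS => by have := hS.two_mul_le_of_cone_pathGraph; omega

/-- For any positive integer `k` and `n ≥ 1`, the fan `Pₙ + K₁` has
`dimₖ = 1` if `n = 1`, `dimₖ = 2` if `n ∈ {2,3}`, `dimₖ = 3` if `n = 6`,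
and `dimₖ = ⌊(2n+2)/5⌋` otherwise. -/
theorem stmt10 (k n : ℕ) (hk : 1 ≤ k) (hn : 1 ≤ n) :
    (n = 1 → dimK (graphJoin (pathGraph n) (⊤ : SimpleGraph (Fin 1))) k = 1) ∧
    (n = 2 ∨ n = 3 → dimK (graphJoin (pathGraph n) (⊤ : SimpleGraph (Fin 1))) k = 2) ∧
    (n = 6 → dimK (graphJoin (pathGraph n) (⊤ : SimpleGraph (Fin 1))) k = 3) ∧
    (n ≠ 1 ∧ n ≠ 2 ∧ n ≠ 3 ∧ n ≠ 6 →
      dimK (graphJoin (pathGraph n) (⊤ : SimpleGraph (Fin 1))) k = (2 * n + 2) / 5) :=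
  stmt10_general k n hk
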